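/- G_NNI(X;Y) = 0 if and only if for every pair (x,y) with p_{XY}(x,y) > 0, either p_{X|Y}(x|y) = 1 or p_{Y|X}(y|x) = 1 (equivalently, the characteristic bipartite graph of (X,Y) contains no path of length 3). -/

import Mathlib

open scoped BigOperators Pointwise Classical

noncomputable section

namespace GW

/-- A probability mass function on a finite type. -/
def IsPMF {α : Type} [Fintype α] (p : α → ℝ) : Prop :=
  (∀ a, 0 ≤ p a) ∧ ∑ a, p a = 1

/-- Distribution (pmf) of the random variable `f` under the pmf `p`. -/
def dist {α β : Type} [Fintype α] (p : α → ℝ) (f : α → β) : β → ℝ :=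
  fun b => ∑ a, if f a = b then p a else 0

/-- Shannon entropy (base 2) of the random variable `f` under the pmf `p`. -/
def H {α β : Type} [Fintype α] [Fintype β] (p : α → ℝ) (f : α → β) : ℝ :=
  ∑ b, -(dist p f b * Real.logb 2 (dist p f b))

/-- Mutual information `I(f; g)` under `p`. -/
def I2 {α β γ : Type} [Fintype α] [Fintype β] [Fintype γ]
    (p : α → ℝ) (f : α → β) (g : α → γ) : ℝ :=
  H p f + H p g - H p (fun a => (f a, g a))

/-- Conditional entropy `H(f | g)` under `p`. -/
def Hc {α β γ : Type} [Fintype α] [Fintype β] [Fintype γ]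
    (p : α → ℝ) (f : α → β) (g : α → γ) : ℝ :=
  H p (fun a => (f a, g a)) - H p g

/-- Conditional mutual information `I(f; g | h)` under `p`. -/
def Ic {α β γ δ : Type} [Fintype α] [Fintype β] [Fintype γ] [Fintype δ]
    (p : α → ℝ) (f : α → β) (g : α → γ) (h : α → δ) : ℝ :=
  Hc p f h + Hc p g h - Hc p (fun a => (f a, g a)) h

/-- Independence of the random variables `f` and `g` under `p`. -/
def Indep {α β γ : Type} [Fintype α] (p : α → ℝ) (f : α → β) (g : α → γ) : Prop :=
  ∀ b c, dist p (fun a => (f a, g a)) (b, c) = dist p f b * dist p g c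

/-- `q` is a joint pmf on `X × Y × U` whose `(X,Y)`-marginal is `p`; i.e. `U` is an
auxiliary random variable defined jointly with `(X,Y)` via a conditional pmf `p_{U|XY}`. -/
def IsAux {X Y U : Type} [Fintype X] [Fintype Y] [Fintype U]
    (p : X × Y → ℝ) (q : X × Y × U → ℝ) : Prop :=
  IsPMF q ∧ ∀ x y, (∑ u, q (x, y, u)) = p (x, y)

/-- Coordinate map onto `X`. -/
def cX {X Y U : Type} : X × Y × U → X := fun a => a.1
/-- Coordinate map onto `Y`. -/
def cY {X Y U : Type} : X × Y × U → Y := fun a => a.2.1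
/-- Coordinate map onto `U`. -/
def cU {X Y U : Type} : X × Y × U → U := fun a => a.2.2
/-- Coordinate map onto `X × Y`. -/
def cXY {X Y U : Type} : X × Y × U → X × Y := fun a => (a.1, a.2.1)

/-- The mutual information region `𝓘_{XY}`. -/
def MIRegion {X Y : Type} [Fintype X] [Fintype Y] (p : X × Y → ℝ) : Set (ℝ × ℝ × ℝ) :=
  { v | ∃ (U : Type) (_ : Fintype U) (q : X × Y × U → ℝ), IsAux p q ∧
      v = (I2 q cX cU, I2 q cY cU, I2 q cXY cU) }

/-- The outer region `𝓘ᵒ_{XY}`. -/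
def OuterRegion {X Y : Type} [Fintype X] [Fintype Y] (p : X × Y → ℝ) : Set (ℝ × ℝ × ℝ) :=
  { v | 0 ≤ v.1 ∧ 0 ≤ v.2.1 ∧ v.1 + v.2.1 - v.2.2 ≤ I2 p Prod.fst Prod.snd ∧
        0 ≤ v.2.2 - v.2.1 ∧ v.2.2 - v.2.1 ≤ Hc p Prod.fst Prod.snd ∧
        0 ≤ v.2.2 - v.1 ∧ v.2.2 - v.1 ≤ Hc p Prod.snd Prod.fst }

/-- Maximal interaction information `G_NNI(X; Y)`. -/
def GNNI {X Y : Type} [Fintype X] [Fintype Y] (p : X × Y → ℝ) : ℝ :=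
  sSup { r | ∃ (U : Type) (_ : Fintype U) (q : X × Y × U → ℝ), IsAux p q ∧
      r = Ic q cX cY cU - I2 p Prod.fst Prod.snd }

/-- Asymmetric private interaction information `G_PNI(X → Y)`. -/
def GPNI {X Y : Type} [Fintype X] [Fintype Y] (p : X × Y → ℝ) : ℝ :=
  sSup { r | ∃ (U : Type) (_ : Fintype U) (q : X × Y × U → ℝ), IsAux p q ∧
      Indep q cU cX ∧ r = Ic q cX cY cU - I2 p Prod.fst Prod.snd }

/-- Symmetric private interaction information `G_PPI(X; Y)`. -/
def GPPI {X Y : Type} [Fintype X] [Fintype Y] (p : X × Y → ℝ) : ℝ :=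
  sSup { r | ∃ (U : Type) (_ : Fintype U) (q : X × Y × U → ℝ), IsAux p q ∧
      Indep q cU cX ∧ Indep q cU cY ∧ r = Ic q cX cY cU - I2 p Prod.fst Prod.snd }


/-!
If every edge of the support graph has an end of degree one, the support is a disjoint union of
stars; the star `K` containing `(X, Y)` is a function of `X` and of `Y`, and on each star one of
`X`, `Y` is constant. Hence `H(X) + H(Y) = H(X, Y) + H(K)` and likewise
`H(X, U) + H(Y, U) = H(X, Y, U) + H(K, U)`, so that `I(X;Y|U) - I(X;Y) = -I(K;U) ≤ 0`, with
equality for a constant `U`.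

Otherwise some edge `(x₀, y₀)` is the middle of a path `x₁ - y₀ - x₀ - y₁`. Let `U` be a fair bit
whose conditional law is tilted by `m = +c` on `(x₀, y₀)` and `m = -c` on `(x₀, y₁)` and
`(x₁, y₀)`. With `k(t) = D(Ber(1/2 + t) ‖ Ber(1/2))` and `m_X`, `m_Y` the row and column sums
of `m`, exactly
  `I(X;Y|U) - I(X;Y) = k(∑ m) + ∑ p k(m / p) - ∑ p_X k(m_X / p_X) - ∑ p_Y k(m_Y / p_Y)`.
Here `m_X`, `m_Y` vanish except at `x₁`, `y₁`, and since `w ↦ w k(c / w)` is antitone (convexity of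
`k` and `k(0) = 0`) these two terms are dominated by the cells `(x₁, y₀)` and `(x₀, y₁)`, leaving at
least `p(x₀, y₀) k(c / p(x₀, y₀)) > 0`.
-/

section Dist

variable {α β γ : Type} [Fintype α]

lemma dist_nonneg {p : α → ℝ} (hp : ∀ a, 0 ≤ p a) (f : α → β) (b : β) : 0 ≤ dist p f b :=
  Finset.sum_nonneg fun a _ => by split_ifs <;> simp [hp a]

lemma sum_dist_mul [Fintype β] (p : α → ℝ) (f : α → β) (F : β → ℝ) :
    ∑ b, dist p f b * F b = ∑ a, p a * F (f a) := by
  simp only [dist, Finset.sum_mul, ite_mul, zero_mul]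
  rw [Finset.sum_comm]
  simp

lemma sum_dist [Fintype β] (p : α → ℝ) (f : α → β) : ∑ b, dist p f b = ∑ a, p a := by
  simpa using sum_dist_mul p f fun _ => 1

lemma dist_comp [Fintype β] (p : α → ℝ) (f : α → β) (g : β → γ) :
    dist p (fun a => g (f a)) = dist (dist p f) g := by
  ext c
  simpa [dist, mul_ite] using (sum_dist_mul p f fun b => if g b = c then (1 : ℝ) else 0).symm

lemma dist_id (p : α → ℝ) : dist p id = p := by
  ext a; simp [dist]

lemma dist_sub (p q : α → ℝ) (f : α → β) : dist (p - q) f = dist p f - dist q f := by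
  ext b; simp [dist, ← Finset.sum_sub_distrib, ite_sub_ite]

lemma dist_single [DecidableEq α] [DecidableEq β] (a : α) (c : ℝ) (f : α → β) :
    dist (Pi.single a c) f = Pi.single (f a) c := by
  ext b
  rw [dist, Finset.sum_eq_single a (fun a' _ h => by simp [h]) (by simp)]
  simp [Pi.single_apply, eq_comm]

lemma dist_half_add_mul (p m : α → ℝ) (s : ℝ) (f : α → β) (b : β) :
    dist (fun a => p a / 2 + s * m a) f b = dist p f b / 2 + s * dist m f b := by
  simp only [dist, Finset.sum_div, Finset.mul_sum, ← Finset.sum_add_distrib]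
  exact Finset.sum_congr rfl fun a _ => by split_ifs <;> simp

lemma le_dist {p : α → ℝ} (hp : ∀ a, 0 ≤ p a) (f : α → β) (a : α) : p a ≤ dist p f (f a) := by
  simpa [dist] using Finset.single_le_sum (f := fun a' => if f a' = f a then p a' else 0)
    (fun a' _ => by split_ifs <;> simp [hp a']) (Finset.mem_univ a)

lemma dist_le_dist_comp {p : α → ℝ} (hp : ∀ a, 0 ≤ p a) (f : α → β) (g : β → γ) (b : β) :
    dist p f b ≤ dist p (fun a => g (f a)) (g b) :=
  Finset.sum_le_sum fun a _ => by
    by_cases h : f a = b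
    · simp [h]
    · split_ifs <;> simp_all

variable {p : α → ℝ} {f : α → β} {a a' : α}

lemma dist_apply_eq_of_forall (h : ∀ a', a' ≠ a → f a' = f a → p a' = 0) :
    dist p f (f a) = p a := by
  rw [dist, Finset.sum_eq_single a (fun a' _ hne => by split_ifs with hf <;> simp [h a' hne, hf])
    (by simp), if_pos rfl]

lemma eq_zero_of_eq_dist (hp : ∀ a, 0 ≤ p a) (h : p a = dist p f (f a)) (hne : a' ≠ a)
    (hf : f a' = f a) : p a' = 0 := by
  have : p a + p a' ≤ dist p f (f a) :=
    calc p a + p a' = ∑ i ∈ {a, a'}, if f i = f a then p i else 0 := by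
          rw [Finset.sum_pair hne.symm]; simp [hf]
      _ ≤ dist p f (f a) := Finset.sum_le_sum_of_subset_of_nonneg (Finset.subset_univ _)
          fun i _ _ => by split_ifs <;> simp [hp i]
  linarith [hp a']

lemma dist_eq_apply_of_eq_dist (hp : ∀ a, 0 ≤ p a) {w : α → ℝ} (hw : ∀ a, p a = 0 → w a = 0)
    (h : p a = dist p f (f a)) : dist w f (f a) = w a :=
  dist_apply_eq_of_forall fun _ hne hf => hw _ (eq_zero_of_eq_dist hp h hne hf)

lemma exists_ne_pos_of_ne_dist (hp : ∀ a, 0 ≤ p a) (h : p a ≠ dist p f (f a)) :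
    ∃ a', a' ≠ a ∧ f a' = f a ∧ 0 < p a' := by
  by_contra! H
  exact h (dist_apply_eq_of_forall fun a' hne hf => le_antisymm (H a' hne hf) (hp a')).symm

end Dist

section Entropy

variable {α β γ δ : Type} [Fintype α] [Fintype β] [Fintype γ]

lemma H_eq_neg_sum (p : α → ℝ) (f : α → β) :
    H p f = -∑ a, p a * Real.logb 2 (dist p f (f a)) := by
  rw [H, ← sum_dist_mul p f fun b => Real.logb 2 (dist p f b), ← Finset.sum_neg_distrib]

lemma H_comp (p : α → ℝ) (f : α → β) (g : β → γ) : H p (fun a => g (f a)) = H (dist p f) g := by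
  rw [H, H, dist_comp]

lemma H_comp_le {p : α → ℝ} (hp : ∀ a, 0 ≤ p a) (f : α → β) (g : β → γ) :
    H p (fun a => g (f a)) ≤ H p f := by
  rw [H_eq_neg_sum, H_eq_neg_sum, neg_le_neg_iff]
  refine Finset.sum_le_sum fun a _ => ?_
  rcases (hp a).eq_or_lt with h | h
  · simp [← h]
  · refine mul_le_mul_of_nonneg_left ?_ h.le
    exact Real.logb_le_logb_of_le one_lt_two (h.trans_le (le_dist hp f a))
      (dist_le_dist_comp hp f g (f a))

lemma Ic_eq [Fintype δ] (p : α → ℝ) (f : α → β) (g : α → γ) (h : α → δ) :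
    Ic p f g h = H p (fun a => (f a, h a)) + H p (fun a => (g a, h a)) - H p h
      - H p (fun a => ((f a, g a), h a)) := by
  unfold Ic Hc; ring

lemma H_add_H_eq_of_dist_mul [Fintype δ] {ε : Type} [Fintype ε] {p : α → ℝ} (hp : ∀ a, 0 ≤ p a)
    {f : α → β} {g : α → γ} {j : α → δ} {k : α → ε}
    (h : ∀ a, p a ≠ 0 → dist p f (f a) * dist p g (g a) = dist p j (j a) * dist p k (k a)) :
    H p f + H p g = H p j + H p k := by
  simp only [H_eq_neg_sum, ← neg_add, ← Finset.sum_add_distrib, ← mul_add]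
  congr 2 with a
  rcases (hp a).eq_or_lt with ha | ha
  · simp [← ha]
  · have pos {ι : Type} (e : α → ι) : 0 < dist p e (e a) := ha.trans_le (le_dist hp e a)
    rw [← Real.logb_mul (pos f).ne' (pos g).ne', ← Real.logb_mul (pos j).ne' (pos k).ne',
      h a ha.ne']

lemma mul_logb_sub_logb_le {a b : ℝ} (ha : 0 ≤ a) (hb : 0 ≤ b) (hab : a ≠ 0 → b ≠ 0) :
    a * (Real.logb 2 b - Real.logb 2 a) ≤ (b - a) / Real.log 2 := by
  rcases ha.eq_or_lt with rfl | ha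
  · simpa using div_nonneg hb (Real.log_pos one_lt_two).le
  have hb : 0 < b := hb.lt_of_ne' (hab ha.ne')
  rw [← Real.logb_div hb.ne' ha.ne', Real.logb, mul_div_assoc']
  gcongr
  calc a * Real.log (b / a) ≤ a * (b / a - 1) :=
        mul_le_mul_of_nonneg_left (Real.log_le_sub_one_of_pos (div_pos hb ha)) ha.le
    _ = b - a := by field_simp

lemma sum_mul_logb_sub_logb_nonpos {ι : Type} [Fintype ι] {a b : ι → ℝ} (ha : ∀ i, 0 ≤ a i)
    (hb : ∀ i, 0 ≤ b i) (hab : ∀ i, a i ≠ 0 → b i ≠ 0) (hsum : ∑ i, b i ≤ ∑ i, a i) :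
    ∑ i, a i * (Real.logb 2 (b i) - Real.logb 2 (a i)) ≤ 0 :=
  calc ∑ i, a i * (Real.logb 2 (b i) - Real.logb 2 (a i))
      ≤ ∑ i, (b i - a i) / Real.log 2 :=
        Finset.sum_le_sum fun i _ => mul_logb_sub_logb_le (ha i) (hb i) (hab i)
    _ ≤ 0 := by
        rw [← Finset.sum_div, Finset.sum_sub_distrib]
        exact div_nonpos_of_nonpos_of_nonneg (by linarith) (Real.log_pos one_lt_two).le

lemma H_pair_le {p : α → ℝ} (hp : IsPMF p) (f : α → β) (g : α → γ) :
    H p (fun a => (f a, g a)) ≤ H p f + H p g := by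
  set d := dist p (fun a => (f a, g a))
  have hle_fst (z : β × γ) : d z ≤ dist p f z.1 := dist_le_dist_comp hp.1 _ Prod.fst z
  have hle_snd (z : β × γ) : d z ≤ dist p g z.2 := dist_le_dist_comp hp.1 _ Prod.snd z
  have hgibbs := sum_mul_logb_sub_logb_nonpos (a := d) (b := fun z => dist p f z.1 * dist p g z.2)
    (dist_nonneg hp.1 _) (fun z => mul_nonneg (dist_nonneg hp.1 _ _) (dist_nonneg hp.1 _ _))
    (fun z hz => by
      have hz := (dist_nonneg hp.1 _ z).lt_of_ne' hz
      exact (mul_pos (hz.trans_le (hle_fst z)) (hz.trans_le (hle_snd z))).ne')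
    (by rw [Fintype.sum_prod_type, ← Finset.sum_mul_sum, sum_dist, sum_dist, sum_dist, hp.2,
      one_mul])
  have hsplit (z : β × γ) : d z * (Real.logb 2 (dist p f z.1 * dist p g z.2) - Real.logb 2 (d z))
      = d z * Real.logb 2 (dist p f z.1) + d z * Real.logb 2 (dist p g z.2)
        - d z * Real.logb 2 (d z) := by
    rcases eq_or_ne (d z) 0 with hz | hz
    · simp [hz]
    · have hz : 0 < d z := (dist_nonneg hp.1 _ z).lt_of_ne' hz
      rw [Real.logb_mul (hz.trans_le (hle_fst z)).ne' (hz.trans_le (hle_snd z)).ne']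
      ring
  simp only [hsplit, Finset.sum_sub_distrib, Finset.sum_add_distrib, d, sum_dist_mul] at hgibbs
  simp only [H_eq_neg_sum]
  linarith

end Entropy

section Marginals

variable {X Y U β : Type} [Fintype X] [Fintype Y] [Fintype U]

lemma dist_cU (q : X × Y × U → ℝ) (u : U) : dist q cU u = ∑ z : X × Y, q (z.1, z.2, u) := by
  simp only [dist, Fintype.sum_prod_type]
  exact Finset.sum_congr rfl fun x _ => Finset.sum_congr rfl fun y _ =>
    (Fintype.sum_eq_single u fun u' hu' => if_neg hu').trans (if_pos rfl)

lemma dist_slice (q : X × Y × U → ℝ) (g : X × Y → β) (b : β) (u : U) :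
    dist q (fun a => (g (cXY a), cU a)) (b, u) = dist (fun z => q (z.1, z.2, u)) g b := by
  simp only [dist, Fintype.sum_prod_type]
  refine Finset.sum_congr rfl fun x _ => Finset.sum_congr rfl fun y _ => ?_
  refine (Fintype.sum_eq_single u fun u' hu' => if_neg fun h => hu' (Prod.ext_iff.1 h).2).trans ?_
  simp [cXY, cU]

lemma dist_cXY_apply (q : X × Y × U → ℝ) (x : X) (y : Y) :
    dist q cXY (x, y) = ∑ u, q (x, y, u) := by
  simp only [dist, Fintype.sum_prod_type]
  refine (Fintype.sum_eq_single x fun x' hx' => Finset.sum_eq_zero fun y' _ =>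
    Finset.sum_eq_zero fun u _ => if_neg fun h => hx' (Prod.ext_iff.1 h).1).trans ?_
  refine (Fintype.sum_eq_single y fun y' hy' => Finset.sum_eq_zero fun u _ =>
    if_neg fun h => hy' (Prod.ext_iff.1 h).2).trans ?_
  exact Finset.sum_congr rfl fun u _ => if_pos rfl

variable {p : X × Y → ℝ} {q : X × Y × U → ℝ}

lemma IsAux.dist_cXY (hq : IsAux p q) : dist q cXY = p := by
  ext ⟨x, y⟩
  rw [dist_cXY_apply, hq.2]

lemma IsAux.H_comp_cXY [Fintype β] (hq : IsAux p q) (g : X × Y → β) :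
    H q (fun a => g (cXY a)) = H p g := by
  rw [H_comp, hq.dist_cXY]

lemma IsAux.eq_zero_of_eq_zero (hq : IsAux p q) {x : X} {y : Y} (h : p (x, y) = 0) (u : U) :
    q (x, y, u) = 0 := by
  refine le_antisymm ?_ (hq.1.1 _)
  rw [← h, ← hq.2]
  exact Finset.single_le_sum (f := fun u => q (x, y, u)) (fun u _ => hq.1.1 _) (Finset.mem_univ u)

lemma IsAux.Ic_le (hq : IsAux p q) : Ic q cX cY cU ≤ H p Prod.fst := by
  have hYU : H q (fun a => (cY a, cU a)) ≤ H q (fun a => ((cX a, cY a), cU a)) :=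
    H_comp_le hq.1.1 (fun a => ((cX a, cY a), cU a)) fun z => (z.1.2, z.2)
  have hXU : H q (fun a => (cX a, cU a)) ≤ H q cX + H q cU := H_pair_le hq.1 cX cU
  have hX : H q cX = H p Prod.fst := hq.H_comp_cXY Prod.fst
  rw [Ic_eq]
  linarith

end Marginals

section StarForest

variable {X Y U : Type} [Fintype X] [Fintype Y] [Fintype U]

/-- `p (x, y) = dist p Prod.snd y` says that `(x, y)` is the only edge at `y`: every edge of the
support graph has an end of degree one, i.e. its components are stars. -/
def IsStarForest (p : X × Y → ℝ) : Prop :=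
  ∀ x y, 0 < p (x, y) → p (x, y) = dist p Prod.snd y ∨ p (x, y) = dist p Prod.fst x

/-- The centre of the star containing the edge `z`, when `IsStarForest p`. -/
def starCenter (p : X × Y → ℝ) (z : X × Y) : X ⊕ Y :=
  if p z = dist p Prod.snd z.2 then .inl z.1 else .inr z.2

variable {p w : X × Y → ℝ} {x : X} {y : Y}

lemma IsStarForest.dist_starCenter_inl (hstar : IsStarForest p) (hp : ∀ z, 0 ≤ p z)
    (hw : ∀ z, p z = 0 → w z = 0) (hxy : p (x, y) ≠ 0) (hleaf : p (x, y) = dist p Prod.snd y) :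
    dist w (starCenter p) (.inl x) = dist w Prod.fst x := by
  refine Finset.sum_congr rfl fun ⟨x', y'⟩ _ => ?_
  by_cases hz : p (x', y') = 0
  · simp [hw _ hz]
  suffices starCenter p (x', y') = .inl x ↔ x' = x by simp only [this]
  refine ⟨fun h => ?_, ?_⟩
  · unfold starCenter at h
    split_ifs at h
    exact Sum.inl_injective h
  · rintro rfl
    by_contra h
    have hne : (x', y') ≠ (x', y) := by rintro ⟨⟩; exact h (if_pos hleaf)
    have hrow := ((hstar x' y' ((hp _).lt_of_ne' hz)).resolve_left fun h' => h (if_pos h'))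
    exact hxy (eq_zero_of_eq_dist (f := Prod.fst) hp hrow hne.symm rfl)

lemma dist_starCenter_inr (hp : ∀ z, 0 ≤ p z) (hw : ∀ z, p z = 0 → w z = 0)
    (hxy : p (x, y) ≠ 0) (hnleaf : p (x, y) ≠ dist p Prod.snd y) :
    dist w (starCenter p) (.inr y) = dist w Prod.snd y := by
  refine Finset.sum_congr rfl fun ⟨x', y'⟩ _ => ?_
  by_cases hz : p (x', y') = 0
  · simp [hw _ hz]
  suffices starCenter p (x', y') = .inr y ↔ y' = y by simp only [this]
  refine ⟨fun h => ?_, ?_⟩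
  · unfold starCenter at h
    split_ifs at h
    exact Sum.inr_injective h
  · rintro rfl
    unfold starCenter
    rw [if_neg fun hleaf => ?_]
    have hne : (x', y') ≠ (x, y') := by rintro ⟨⟩; exact hnleaf hleaf
    exact hxy (eq_zero_of_eq_dist (f := Prod.snd) hp hleaf hne.symm rfl)

lemma IsStarForest.dist_fst_mul_dist_snd (hstar : IsStarForest p) (hp : ∀ z, 0 ≤ p z)
    (hw : ∀ z, p z = 0 → w z = 0) (hxy : p (x, y) ≠ 0) :
    dist w Prod.fst x * dist w Prod.snd y
      = w (x, y) * dist w (starCenter p) (starCenter p (x, y)) := by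
  by_cases hleaf : p (x, y) = dist p Prod.snd y
  · have hcol : dist w Prod.snd y = w (x, y) := dist_eq_apply_of_eq_dist hp hw hleaf
    rw [starCenter, if_pos hleaf, hstar.dist_starCenter_inl hp hw hxy hleaf, hcol, mul_comm]
  · have hrow : dist w Prod.fst x = w (x, y) := dist_eq_apply_of_eq_dist hp hw
      ((hstar x y ((hp _).lt_of_ne' hxy)).resolve_left hleaf)
    rw [starCenter, if_neg hleaf, dist_starCenter_inr hp hw hxy hleaf, hrow]

lemma IsStarForest.H_fst_add_H_snd (hstar : IsStarForest p) (hp : ∀ z, 0 ≤ p z) :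
    H p Prod.fst + H p Prod.snd = H p (fun z => (z.1, z.2)) + H p (starCenter p) :=
  H_add_H_eq_of_dist_mul hp fun ⟨x, y⟩ hxy => by
    have hid : dist p (fun z => (z.1, z.2)) (x, y) = p (x, y) := congrFun (dist_id p) (x, y)
    rw [hid]
    exact hstar.dist_fst_mul_dist_snd hp (fun _ h => h) hxy

lemma IsStarForest.H_XU_add_H_YU (hstar : IsStarForest p) (hp : ∀ z, 0 ≤ p z)
    {q : X × Y × U → ℝ} (hq : IsAux p q) :
    H q (fun a => (cX a, cU a)) + H q (fun a => (cY a, cU a))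
      = H q (fun a => ((cX a, cY a), cU a)) + H q (fun a => (starCenter p (cXY a), cU a)) :=
  H_add_H_eq_of_dist_mul hq.1.1 fun ⟨x, y, u⟩ hq0 => by
    have hXU : dist q (fun a => (cX a, cU a)) (x, u)
        = dist (fun z => q (z.1, z.2, u)) Prod.fst x := dist_slice q Prod.fst x u
    have hYU : dist q (fun a => (cY a, cU a)) (y, u)
        = dist (fun z => q (z.1, z.2, u)) Prod.snd y := dist_slice q Prod.snd y u
    have hXYU : dist q (fun a => ((cX a, cY a), cU a)) ((x, y), u) = q (x, y, u) :=
      (dist_slice q id (x, y) u).trans (congrFun (dist_id _) (x, y))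
    have hKU := dist_slice q (starCenter p) (starCenter p (x, y)) u
    change dist q _ (x, u) * dist q _ (y, u)
      = dist q _ ((x, y), u) * dist q _ (starCenter p (x, y), u)
    rw [hXU, hYU, hXYU, hKU]
    exact hstar.dist_fst_mul_dist_snd hp (fun _ h => hq.eq_zero_of_eq_zero h u)
      fun h => hq0 (hq.eq_zero_of_eq_zero h u)

lemma IsStarForest.Ic_sub_I2_nonpos (hstar : IsStarForest p) (hp : ∀ z, 0 ≤ p z)
    {q : X × Y × U → ℝ} (hq : IsAux p q) : Ic q cX cY cU - I2 p Prod.fst Prod.snd ≤ 0 := by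
  have hU := hstar.H_XU_add_H_YU hp hq
  have hsub : H q (fun a => (starCenter p (cXY a), cU a))
      ≤ H q (fun a => starCenter p (cXY a)) + H q cU := H_pair_le hq.1 _ _
  rw [hq.H_comp_cXY] at hsub
  have := hstar.H_fst_add_H_snd hp
  rw [Ic_eq, I2]
  linarith

end StarForest

section KLHalf

open Real

/-- The Kullback–Leibler divergence `D(Ber(1/2 + t) ‖ Ber(1/2))`, in bits. -/
def klHalf (t : ℝ) : ℝ := 1 - binEntropy (2⁻¹ + t) / log 2

lemma klHalf_neg (t : ℝ) : klHalf (-t) = klHalf t := by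
  rw [klHalf, klHalf, ← sub_eq_add_neg, binEntropy_two_inv_add]

lemma klHalf_zero : klHalf 0 = 0 := by
  simp [klHalf, (log_pos one_lt_two).ne']

lemma klHalf_nonneg (t : ℝ) : 0 ≤ klHalf t := by
  rw [klHalf, sub_nonneg, div_le_one (log_pos one_lt_two)]
  exact binEntropy_le_log_two

lemma klHalf_pos {t : ℝ} (ht : t ≠ 0) : 0 < klHalf t := by
  rw [klHalf, sub_pos, div_lt_one (log_pos one_lt_two), binEntropy_lt_log_two]
  simpa using ht

lemma sum_mul_klHalf_single {ι : Type} [Fintype ι] [DecidableEq ι] (P : ι → ℝ) (i : ι) (c : ℝ) :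
    ∑ j, P j * klHalf ((Pi.single i c : ι → ℝ) j / P j) = P i * klHalf (c / P i) := by
  rw [Finset.sum_eq_single i (fun j _ hj => by simp [hj, klHalf_zero]) (by simp)]
  simp

lemma klHalf_mul_le {l t : ℝ} (ht : |t| ≤ 2⁻¹) (hl₀ : 0 ≤ l) (hl₁ : l ≤ 1) :
    klHalf (l * t) ≤ l * klHalf t := by
  have hconc := strictConcave_binEntropy.concaveOn.2 (x := 2⁻¹ + t) (y := 2⁻¹)
    (by constructor <;> linarith [abs_le.1 ht]) (by norm_num) hl₀ (sub_nonneg.2 hl₁)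
    (add_sub_cancel l 1)
  rw [smul_eq_mul, smul_eq_mul, smul_eq_mul, smul_eq_mul, binEntropy_two_inv,
    show l * (2⁻¹ + t) + (1 - l) * 2⁻¹ = 2⁻¹ + l * t by ring] at hconc
  have hgap : l * klHalf t - klHalf (l * t)
      = (binEntropy (2⁻¹ + l * t) - l * binEntropy (2⁻¹ + t) - (1 - l) * log 2) / log 2 := by
    rw [klHalf, klHalf]
    field_simp
    ring
  have : 0 ≤ (binEntropy (2⁻¹ + l * t) - l * binEntropy (2⁻¹ + t) - (1 - l) * log 2) / log 2 :=
    div_nonneg (by linarith) (log_pos one_lt_two).le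
  linarith

lemma mul_klHalf_div_le {w W c : ℝ} (hw : 0 < w) (hwW : w ≤ W) (hc : |c| ≤ w / 2) :
    W * klHalf (c / W) ≤ w * klHalf (c / w) := by
  have hW := hw.trans_le hwW
  have h := klHalf_mul_le (l := w / W) (t := c / w)
    (by rw [abs_div, abs_of_pos hw, div_le_iff₀ hw]; linarith) (by positivity)
    (div_le_one_of_le₀ hwW hW.le)
  rw [show w / W * (c / w) = c / W by field_simp] at h
  calc W * klHalf (c / W) ≤ W * (w / W * klHalf (c / w)) := mul_le_mul_of_nonneg_left h hW.le
    _ = w * klHalf (c / w) := by field_simp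

lemma neg_mul_logb_half_add_sub (w s : ℝ) :
    -((w / 2 + s) * logb 2 (w / 2 + s)) + -((w / 2 - s) * logb 2 (w / 2 - s))
      = -(w * logb 2 w) + w - w * klHalf (s / w) := by
  rcases eq_or_ne w 0 with rfl | hw
  · -- `logb 2` is even, and `s / 0 = 0` on the right
    simp [logb, log_neg_eq_log]
  have key : negMulLog (w / 2 + s) + negMulLog (w / 2 - s)
      = negMulLog w + w * binEntropy (2⁻¹ + s / w) := by
    rw [binEntropy_eq_negMulLog_add_negMulLog_one_sub,
      show w / 2 + s = w * (2⁻¹ + s / w) by field_simp,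
      show w / 2 - s = w * (1 - (2⁻¹ + s / w)) by field_simp; ring,
      negMulLog_mul, negMulLog_mul]
    ring
  have hb (x : ℝ) : -(x * logb 2 x) = negMulLog x / log 2 := by rw [logb, negMulLog]; ring
  rw [hb, hb, hb, ← add_div, key, klHalf]
  ring

end KLHalf

section Tilt

variable {X Y β : Type} [Fintype X] [Fintype Y] {p : X × Y → ℝ}

/-- The bit `U` with `P(U = true | X = x, Y = y) = 1/2 + m (x, y) / p (x, y)`. -/
def tilt (p m : X × Y → ℝ) : X × Y × Bool → ℝ :=
  fun a => p (cXY a) / 2 + (if cU a then 1 else -1) * m (cXY a)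

lemma tilt_isAux {m : X × Y → ℝ} (hp : IsPMF p) (hm : ∀ z, |m z| ≤ p z / 2) :
    IsAux p (tilt p m) := by
  have hsum (x : X) (y : Y) : ∑ u, tilt p m (x, y, u) = p (x, y) := by
    rw [Fintype.sum_bool]
    simp only [tilt, cXY, cU, ↓reduceIte, Bool.false_eq_true]
    ring
  refine ⟨⟨fun ⟨x, y, u⟩ => ?_, ?_⟩, hsum⟩
  · have := abs_le.1 (hm (x, y))
    cases u <;> simp only [tilt, cXY, cU, ↓reduceIte, Bool.false_eq_true] <;> linarith
  · rw [← sum_dist _ cXY, Fintype.sum_prod_type]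
    simp only [dist_cXY_apply, hsum]
    rw [← Fintype.sum_prod_type p, hp.2]

lemma dist_tilt (m : X × Y → ℝ) (g : X × Y → β) (b : β) (u : Bool) :
    dist (tilt p m) (fun a => (g (cXY a), cU a)) (b, u)
      = dist p g b / 2 + (if u then 1 else -1) * dist m g b := by
  rw [dist_slice]
  exact dist_half_add_mul p m (if u then 1 else -1) g b

lemma H_tilt [Fintype β] (hp : ∑ z, p z = 1) (m : X × Y → ℝ) (g : X × Y → β) :
    H (tilt p m) (fun a => (g (cXY a), cU a))
      = H p g + 1 - ∑ b, dist p g b * klHalf (dist m g b / dist p g b) := by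
  have htrue (b : β) : dist (tilt p m) (fun a => (g (cXY a), cU a)) (b, true)
      = dist p g b / 2 + dist m g b := by simp [dist_tilt]
  have hfalse (b : β) : dist (tilt p m) (fun a => (g (cXY a), cU a)) (b, false)
      = dist p g b / 2 - dist m g b := by simp [dist_tilt, sub_eq_add_neg]
  simp only [H, Fintype.sum_prod_type, Fintype.sum_bool, htrue, hfalse, neg_mul_logb_half_add_sub]
  rw [Finset.sum_sub_distrib, Finset.sum_add_distrib, sum_dist, hp]

lemma H_tilt_cU (hp : ∑ z, p z = 1) (m : X × Y → ℝ) :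
    H (tilt p m) cU = 1 - klHalf (∑ z, m z) := by
  have hd (s : ℝ) : ∑ z, (p z / 2 + s * m z) = 1 / 2 + s * ∑ z, m z := by
    rw [Finset.sum_add_distrib, ← Finset.sum_div, ← Finset.mul_sum, hp]
  have htrue : dist (tilt p m) cU true = 1 / 2 + ∑ z, m z := by
    simpa [dist_cU, tilt, cXY, cU] using hd 1
  have hfalse : dist (tilt p m) cU false = 1 / 2 - ∑ z, m z := by
    simpa [dist_cU, tilt, cXY, cU, sub_eq_add_neg] using hd (-1)
  rw [H, Fintype.sum_bool, htrue, hfalse, neg_mul_logb_half_add_sub]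
  simp

lemma Ic_sub_I2_tilt (hp : ∑ z, p z = 1) (m : X × Y → ℝ) :
    Ic (tilt p m) cX cY cU - I2 p Prod.fst Prod.snd
      = klHalf (∑ z, m z) + ∑ z, p z * klHalf (m z / p z)
        - ∑ x, dist p Prod.fst x * klHalf (dist m Prod.fst x / dist p Prod.fst x)
        - ∑ y, dist p Prod.snd y * klHalf (dist m Prod.snd y / dist p Prod.snd y) := by
  have hXU : H (tilt p m) (fun a => (cX a, cU a)) = _ := H_tilt hp m Prod.fst
  have hYU : H (tilt p m) (fun a => (cY a, cU a)) = _ := H_tilt hp m Prod.snd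
  have hXYU : H (tilt p m) (fun a => ((cX a, cY a), cU a)) = _ := H_tilt hp m id
  have hXY : H p (fun z => (z.1, z.2)) = H p id := rfl
  rw [dist_id, dist_id] at hXYU
  rw [Ic_eq, I2, hXU, hYU, hXYU, hXY, H_tilt_cU hp]
  ring

end Tilt

section PathShift

variable {X Y : Type} {p : X × Y → ℝ} {x₀ x₁ : X} {y₀ y₁ : Y} {c : ℝ}

def pathShift (x₀ x₁ : X) (y₀ y₁ : Y) (c : ℝ) : X × Y → ℝ :=
  Pi.single (x₀, y₀) c - Pi.single (x₀, y₁) c - Pi.single (x₁, y₀) c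

lemma abs_pathShift_le (hx : x₁ ≠ x₀) (hy : y₁ ≠ y₀) (hp : ∀ z, 0 ≤ p z) (hc : 0 ≤ c)
    (h₀₀ : c ≤ p (x₀, y₀) / 2) (h₀₁ : c ≤ p (x₀, y₁) / 2) (h₁₀ : c ≤ p (x₁, y₀) / 2) (z : X × Y) :
    |pathShift x₀ x₁ y₀ y₁ c z| ≤ p z / 2 := by
  have hz : 0 ≤ p z / 2 := by linarith [hp z]
  simp only [pathShift, Pi.sub_apply, Pi.single_apply]
  split_ifs <;> simp_all [abs_of_nonneg hc]

variable [Fintype X] [Fintype Y]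

lemma sum_pathShift : ∑ z, pathShift x₀ x₁ y₀ y₁ c z = -c := by
  simp [pathShift, Finset.sum_sub_distrib]

lemma dist_pathShift_fst : dist (pathShift x₀ x₁ y₀ y₁ c) Prod.fst = Pi.single x₁ (-c) := by
  simp [pathShift, dist_sub, dist_single, Pi.single_neg]

lemma dist_pathShift_snd : dist (pathShift x₀ x₁ y₀ y₁ c) Prod.snd = Pi.single y₁ (-c) := by
  simp [pathShift, dist_sub, dist_single, Pi.single_neg]

lemma Ic_sub_I2_tilt_pathShift_pos (hp : IsPMF p) (hx : x₁ ≠ x₀) (hy : y₁ ≠ y₀)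
    (h₀₀ : 0 < p (x₀, y₀)) (h₀₁ : 0 < p (x₀, y₁)) (h₁₀ : 0 < p (x₁, y₀)) (hc : 0 < c)
    (hc₀₁ : c ≤ p (x₀, y₁) / 2) (hc₁₀ : c ≤ p (x₁, y₀) / 2) :
    0 < Ic (tilt p (pathShift x₀ x₁ y₀ y₁ c)) cX cY cU - I2 p Prod.fst Prod.snd := by
  set m := pathShift x₀ x₁ y₀ y₁ c
  have hcells : p (x₀, y₀) * klHalf (c / p (x₀, y₀)) + (p (x₀, y₁) * klHalf (c / p (x₀, y₁))
      + p (x₁, y₀) * klHalf (c / p (x₁, y₀))) ≤ ∑ z, p z * klHalf (m z / p z) := by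
    have h := Finset.sum_le_sum_of_subset_of_nonneg
      (Finset.subset_univ {(x₀, y₀), (x₀, y₁), (x₁, y₀)})
      fun z _ _ => mul_nonneg (hp.1 z) (klHalf_nonneg (m z / p z))
    rw [Finset.sum_insert (by simp [hx.symm, hy.symm]), Finset.sum_insert (by simp [hx.symm]),
      Finset.sum_singleton] at h
    simpa [m, pathShift, Pi.single_apply, hx, hy, hx.symm, hy.symm, neg_div, klHalf_neg] using h
  have hrow : dist p Prod.fst x₁ * klHalf (c / dist p Prod.fst x₁)
      ≤ p (x₁, y₀) * klHalf (c / p (x₁, y₀)) :=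
    mul_klHalf_div_le h₁₀ (le_dist hp.1 Prod.fst (x₁, y₀)) (by rwa [abs_of_pos hc])
  have hcol : dist p Prod.snd y₁ * klHalf (c / dist p Prod.snd y₁)
      ≤ p (x₀, y₁) * klHalf (c / p (x₀, y₁)) :=
    mul_klHalf_div_le h₀₁ (le_dist hp.1 Prod.snd (x₀, y₁)) (by rwa [abs_of_pos hc])
  have hpos := mul_pos h₀₀ (klHalf_pos (div_pos hc h₀₀).ne')
  rw [Ic_sub_I2_tilt hp.2, sum_pathShift, dist_pathShift_fst, dist_pathShift_snd,
    sum_mul_klHalf_single, sum_mul_klHalf_single]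
  simp only [neg_div, klHalf_neg]
  linarith [klHalf_nonneg c]

end PathShift

section GNNI

variable {X Y : Type} [Fintype X] [Fintype Y] {p : X × Y → ℝ}

lemma le_GNNI {U : Type} [Fintype U] {q : X × Y × U → ℝ} (hq : IsAux p q) :
    Ic q cX cY cU - I2 p Prod.fst Prod.snd ≤ GNNI p :=
  le_csSup ⟨H p Prod.fst - I2 p Prod.fst Prod.snd, by
    rintro r ⟨U', _, q', hq', rfl⟩
    linarith [hq'.Ic_le]⟩ ⟨U, _, q, hq, rfl⟩

lemma GNNI_nonneg (hp : IsPMF p) : 0 ≤ GNNI p := by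
  have h := le_GNNI (tilt_isAux hp (m := 0) fun z => by
    simpa using div_nonneg (hp.1 z) zero_le_two)
  simpa [Ic_sub_I2_tilt hp.2, dist, klHalf_zero] using h

lemma IsStarForest.GNNI_nonpos (hstar : IsStarForest p) (hp : ∀ z, 0 ≤ p z) : GNNI p ≤ 0 :=
  Real.sSup_nonpos fun _ ⟨_, _, _, hq, hr⟩ => hr ▸ hstar.Ic_sub_I2_nonpos hp hq

lemma GNNI_pos_of_not_isStarForest (hp : IsPMF p) (hstar : ¬ IsStarForest p) : 0 < GNNI p := by
  obtain ⟨x₀, y₀, h₀₀, hcol, hrow⟩ : ∃ x y, 0 < p (x, y) ∧ p (x, y) ≠ dist p Prod.snd y ∧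
      p (x, y) ≠ dist p Prod.fst x := by
    simpa [IsStarForest] using hstar
  obtain ⟨⟨x₁, y⟩, hx, hy₀ : y = y₀, h₁₀⟩ := exists_ne_pos_of_ne_dist (f := Prod.snd) hp.1 hcol
  obtain ⟨⟨x, y₁⟩, hy, hx₀ : x = x₀, h₀₁⟩ := exists_ne_pos_of_ne_dist (f := Prod.fst) hp.1 hrow
  subst x y
  have hx : x₁ ≠ x₀ := fun h => hx (by rw [h])
  have hy : y₁ ≠ y₀ := fun h => hy (by rw [h])
  set c := min (p (x₀, y₀)) (min (p (x₀, y₁)) (p (x₁, y₀))) / 2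
  have hc : 0 < c := by positivity
  have hc₀₀ : c ≤ p (x₀, y₀) / 2 := by simp only [c]; gcongr; exact min_le_left _ _
  have hc₀₁ : c ≤ p (x₀, y₁) / 2 := by
    simp only [c]; gcongr; exact (min_le_right _ _).trans (min_le_left _ _)
  have hc₁₀ : c ≤ p (x₁, y₀) / 2 := by
    simp only [c]; gcongr; exact (min_le_right _ _).trans (min_le_right _ _)
  have hq := tilt_isAux hp (abs_pathShift_le hx hy hp.1 hc.le hc₀₀ hc₀₁ hc₁₀)
  exact (Ic_sub_I2_tilt_pathShift_pos hp hx hy h₀₀ h₀₁ h₁₀ hc hc₀₁ hc₁₀).trans_le (le_GNNI hq)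

end GNNI

/-- `G_NNI(X;Y) = 0` iff for every `(x,y)` with `p(x,y) > 0` one has
`p_{X|Y}(x|y) = 1` (i.e. `p(x,y) = p_Y(y)`) or `p_{Y|X}(y|x) = 1` (i.e. `p(x,y) = p_X(x)`). -/
theorem stmt10 {X Y : Type} [Fintype X] [Fintype Y] (p : X × Y → ℝ) (hp : IsPMF p) :
    GNNI p = 0 ↔
      ∀ x y, 0 < p (x, y) → p (x, y) = dist p Prod.snd y ∨ p (x, y) = dist p Prod.fst x := by
  refine ⟨fun h => ?_, fun hstar =>
    le_antisymm (IsStarForest.GNNI_nonpos hstar hp.1) (GNNI_nonneg hp)⟩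
  by_contra hstar
  exact (GNNI_pos_of_not_isStarForest hp hstar).ne' h

end GW
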